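/- Let A = λ·a^{⊗m} + E with a unit length, λ ≠ 0, and suppose |E y^m| ≤ c for all unit vectors y. If (x_p, λ_p) is a principal eigenpair of A with corresponding angle θ between x_p and a (so cos θ = ⟨a, x_p⟩), then |cos θ|^m ≥ 1 − 2c/|λ|. -/

import Mathlib

open Finset

/-- scalar contraction `A x^m`. -/
noncomputable def Axm {n m : ℕ} (A : (Fin m → Fin n) → ℝ)
    (x : EuclideanSpace ℝ (Fin n)) : ℝ :=
  ∑ i : Fin m → Fin n, A i * ∏ k : Fin m, x (i k)

/-- vector contraction `A x^{m−1}` for `m = s+2`. -/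
noncomputable def Axm1 {n s : ℕ} (A : (Fin (s + 2) → Fin n) → ℝ)
    (x : EuclideanSpace ℝ (Fin n)) : EuclideanSpace ℝ (Fin n) :=
  WithLp.toLp 2 (fun t => ∑ j : Fin (s + 1) → Fin n, A (Fin.cons t j) * ∏ k : Fin (s + 1), x (j k))

/-!
Testing the principal eigenpair against the unit vector `a` gives
`|λ_p| ≥ |A a^m| = |λ + E a^m| ≥ |λ| - c`, while evaluating the form at `x_p` gives
`λ ⟨a, x_p⟩^m = λ_p - E x_p^m`, whose absolute value is therefore at least `|λ| - 2c`.
-/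

lemma Axm_add {n m : ℕ} (A B : (Fin m → Fin n) → ℝ) (x : EuclideanSpace ℝ (Fin n)) :
    Axm (A + B) x = Axm A x + Axm B x := by
  simp only [Axm, Pi.add_apply, add_mul, sum_add_distrib]

lemma Axm_smul_rankOne {n m : ℕ} (lam : ℝ) (a x : EuclideanSpace ℝ (Fin n)) :
    Axm (fun i => lam * ∏ k : Fin m, a (i k)) x = lam * inner ℝ a x ^ m := by
  simp only [Axm, PiLp.inner_apply, RCLike.inner_apply, conj_trivial, Fintype.sum_pow,
    mul_sum, mul_assoc, ← prod_mul_distrib, mul_comm (x _)]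

lemma Axm_eq_inner_Axm1 {n s : ℕ} (A : (Fin (s + 2) → Fin n) → ℝ)
    (x : EuclideanSpace ℝ (Fin n)) :
    Axm A x = inner ℝ (Axm1 A x) x := by
  rw [Axm, ← (Fin.consEquiv fun _ : Fin (s + 2) => Fin n).sum_comp, Fintype.sum_prod_type]
  simp only [PiLp.inner_apply, RCLike.inner_apply, conj_trivial, Axm1, mul_sum,
    Fin.consEquiv, Equiv.coe_fn_mk, Fin.prod_univ_succ, Fin.cons_zero, Fin.cons_succ]
  exact sum_congr rfl fun t _ => sum_congr rfl fun j _ => by ring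

lemma Axm_eq_of_Axm1_eq_smul {n s : ℕ} {A : (Fin (s + 2) → Fin n) → ℝ}
    {x : EuclideanSpace ℝ (Fin n)} {μ : ℝ} (hx : ‖x‖ = 1) (heig : Axm1 A x = μ • x) :
    Axm A x = μ := by
  rw [Axm_eq_inner_Axm1, heig, real_inner_smul_left, real_inner_self_eq_norm_sq, hx]
  ring

lemma abs_sub_two_mul_le_abs_mul {lam μ t e₁ e₂ c : ℝ} (hprin : |lam + e₁| ≤ |μ|)
    (hval : lam * t + e₂ = μ) (he₁ : |e₁| ≤ c) (he₂ : |e₂| ≤ c) :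
    |lam| - 2 * c ≤ |lam| * |t| := by
  have h₁ := abs_sub_abs_le_abs_sub lam (-e₁)
  have h₂ := abs_sub_abs_le_abs_sub μ e₂
  rw [sub_neg_eq_add, abs_neg] at h₁
  rw [show μ - e₂ = lam * t by linarith, abs_mul] at h₂
  linarith

/-- for `A = λ·a^{⊗m} + E` (`m = s+2`, `a` unit, `λ ≠ 0`) with noise bound
`|E y^m| ≤ c` on unit vectors, a principal eigenpair `(x_p, λ_p)` with `cos θ = ⟨a,x_p⟩`
satisfies `|cos θ|^m ≥ 1 − 2c/|λ|`. -/
theorem principal_eigenvector_angle {n s : ℕ} (a : EuclideanSpace ℝ (Fin n))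
    (ha : ‖a‖ = 1) (lam c : ℝ) (hlam : lam ≠ 0)
    (E : (Fin (s + 2) → Fin n) → ℝ) (A : (Fin (s + 2) → Fin n) → ℝ)
    (hA : A = fun i => lam * (∏ k : Fin (s + 2), a (i k)) + E i)
    (hE : ∀ y : EuclideanSpace ℝ (Fin n), ‖y‖ = 1 → |Axm E y| ≤ c)
    (xp : EuclideanSpace ℝ (Fin n)) (lamp : ℝ) (hxp : ‖xp‖ = 1)
    (heig : Axm1 A xp = lamp • xp)
    (hprin : ∀ y : EuclideanSpace ℝ (Fin n), ‖y‖ = 1 → |Axm A y| ≤ |lamp|) :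
    |inner ℝ a xp| ^ (s + 2) ≥ 1 - 2 * c / |lam| := by
  have hdecomp (y : EuclideanSpace ℝ (Fin n)) :
      Axm A y = lam * inner ℝ a y ^ (s + 2) + Axm E y := by
    rw [hA, ← Axm_smul_rankOne]
    exact Axm_add _ E y
  have hAa : |lam + Axm E a| ≤ |lamp| := by
    simpa [hdecomp, real_inner_self_eq_norm_sq, ha] using hprin a ha
  have hAxp : lam * inner ℝ a xp ^ (s + 2) + Axm E xp = lamp :=
    (hdecomp xp).symm.trans (Axm_eq_of_Axm1_eq_smul hxp heig)
  have hbound := abs_sub_two_mul_le_abs_mul hAa hAxp (hE a ha) (hE xp hxp)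
  have hpos : 0 < |lam| := abs_pos.mpr hlam
  rw [ge_iff_le, one_sub_div hpos.ne', div_le_iff₀ hpos, ← abs_pow]
  exact hbound.trans_eq (mul_comm _ _)
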